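/- Let V be a finite set, let T be a tree on vertex set V, let v* ∈ V, and for each u ∈ V let D(u) be the set of vertices w ∈ V such that u lies on the unique path in T from w to v* (so u ∈ D(u)). Let G' be a finite simple graph on vertex set V, and let v ≠ v* be any vertex. Then cost(T) := Σ_{u ∈ V, u ≠ v*} |{e ∈ E(G') : e has at least one endpoint in D(u)}| satisfies cost(T) ≥ |E(G')| + |{e ∈ E(G') : e has one endpoint in D(v) and one endpoint in V ∖ (D(v) ∪ {v*})}|. -/
import Mathlib


/-- NO-case counting core: for a tree `T` on `V` rooted at `v*`, with `D(u)` the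
set of vertices whose unique path to `v*` passes through `u`, and any vertex
`v ≠ v*`, the transmission cost is at least `|E(G')|` plus the number of edges
of `G'` with one endpoint in `D(v)` and one endpoint in `V ∖ (D(v) ∪ {v*})`. -/
theorem tree_aggregation_cost_ge_edges_add_cut {V : Type*} [Fintype V]
    [DecidableEq V]
    (T : SimpleGraph V) (hT : T.IsTree) (vstar : V) (G' : SimpleGraph V)
    (D : V → Set V)
    (hD : ∀ u, D u = {w : V | ∀ p : T.Walk w vstar, p.IsPath → u ∈ p.support})
    (v : V) (hv : v ≠ vstar) :
    G'.edgeSet.ncard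
        + {e ∈ G'.edgeSet |
            ∃ a b, e = s(a, b) ∧ a ∈ D v ∧ b ∉ D v ∧ b ≠ vstar}.ncard
      ≤ ∑ u ∈ Finset.univ.erase vstar,
          {e ∈ G'.edgeSet | ∃ a ∈ e, a ∈ D u}.ncard := by
  classical
  have hself : ∀ a : V, a ∈ D a := by
    intro a; rw [hD]; intro p hp; exact p.start_mem_support
  set E : Finset (Sym2 V) := Finset.univ.filter (· ∈ G'.edgeSet) with hE
  have hmemE : ∀ e, e ∈ E ↔ e ∈ G'.edgeSet := by
    intro e; simp [hE]
  have hcardset : ∀ (P : Sym2 V → Prop),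
      {e ∈ G'.edgeSet | P e}.ncard = (E.filter P).card := by
    intro P
    rw [Set.ncard_eq_toFinset_card']
    congr 1
    ext e
    simp [hE, Set.mem_toFinset]
  have hcardE : G'.edgeSet.ncard = E.card := by
    rw [Set.ncard_eq_toFinset_card']
    congr 1
    ext e
    simp [hE, Set.mem_toFinset]
  clear_value E
  simp only [hcardset, hcardE]
  rw [Finset.card_eq_sum_ones E]
  simp only [Finset.card_filter]
  rw [Finset.sum_comm, ← Finset.sum_add_distrib]
  apply Finset.sum_le_sum
  intro e he
  have heE : e ∈ G'.edgeSet := (hmemE e).1 he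
  by_cases hcut : ∃ a b, e = s(a, b) ∧ a ∈ D v ∧ b ∉ D v ∧ b ≠ vstar
  · obtain ⟨a, b, hab, haD, hbD, hbv⟩ := hcut
    have hne : v ≠ b := fun h => hbD (h ▸ hself v)
    have hsub : ({v, b} : Finset V) ⊆ Finset.univ.erase vstar := by
      intro x hx
      rcases Finset.mem_insert.1 hx with h | h
      · exact h ▸ Finset.mem_erase.2 ⟨hv, Finset.mem_univ v⟩
      · exact (Finset.mem_singleton.1 h) ▸ Finset.mem_erase.2 ⟨hbv, Finset.mem_univ b⟩
    refine le_trans ?_ (Finset.sum_le_sum_of_subset hsub)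
    rw [Finset.sum_pair hne,
      if_pos (⟨a, by simp [hab], haD⟩ : ∃ x ∈ e, x ∈ D v),
      if_pos (⟨b, by simp [hab], hself b⟩ : ∃ x ∈ e, x ∈ D b)]
    split <;> omega
  · have hx0 : ∃ u, u ≠ vstar ∧ ∃ a ∈ e, a ∈ D u := by
      induction e with
      | h x y =>
        have hadj : G'.Adj x y := heE
        have hxy : x ≠ y := hadj.ne
        by_cases hx : x = vstar
        · exact ⟨y, fun h => hxy (hx.trans h.symm), y, by simp, hself y⟩
        · exact ⟨x, hx, x, by simp, hself x⟩
    obtain ⟨u, hu, hu2⟩ := hx0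
    have humem : u ∈ Finset.univ.erase vstar := Finset.mem_erase.2 ⟨hu, Finset.mem_univ u⟩
    refine le_trans ?_ (Finset.single_le_sum (fun i _ => Nat.zero_le _) humem)
    rw [if_pos hu2, if_neg hcut]
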